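/- arXiv:1907.06951 — 2 statements merged into one kernel-verified Lean document; each statement's English description precedes it below -/
import Mathlib

section
/- For n ≥ 4, there exists a perfect matching M of the folded hypercube FQ_n such that FQ_n − M is not isomorphic to the hypercube Q_n. Hence the conjecture of Dong and Wang, that FQ_n minus a perfect matching is always isomorphic to Q_n, is false. -/
open SimpleGraph

def cmpl {n : ℕ} (x : Fin n → Bool) : Fin n → Bool := fun i => !x i

/-- The `n`-dimensional hypercube on vertex set `{0,1}^n`. -/
def Q (n : ℕ) : SimpleGraph (Fin n → Bool) where
  Adj x y := hammingDist x y = 1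
  symm := ⟨fun x y h => (hammingDist_comm y x).trans h⟩
  loopless := ⟨fun x h => by simp [hammingDist_self] at h⟩

/-- The folded hypercube: `Q n` plus all complement edges. -/
def FQ (n : ℕ) : SimpleGraph (Fin n → Bool) where
  Adj x y := hammingDist x y = 1 ∨ (x ≠ y ∧ y = cmpl x)
  symm := by
    constructor
    intro x y h
    rcases h with h | ⟨hne, he⟩
    · exact Or.inl ((hammingDist_comm y x).trans h)
    · refine Or.inr ⟨hne.symm, ?_⟩
      subst he; funext i; simp [cmpl]
  loopless := by
    constructor
    intro x h
    rcases h with h | ⟨hne, _⟩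
    · simp [hammingDist_self] at h
    · exact hne rfl

/-- The set of hypercube edges in coordinate direction `j`. -/
def Mdir (n : ℕ) (j : Fin n) : Set (Sym2 (Fin n → Bool)) :=
  {e | ∃ x, e = s(x, Function.update x j (!x j))}

/-- The set of complement edges. -/
def M2 (n : ℕ) : Set (Sym2 (Fin n → Bool)) := {e | ∃ x, e = s(x, cmpl x)}

/-- `M` is a perfect matching of `G`: a set of edges of `G` such that every
vertex lies in exactly one edge of `M`. -/
def IsPerfectMatchingSet {V : Type*} (G : SimpleGraph V) (M : Set (Sym2 V)) : Prop :=
  M ⊆ G.edgeSet ∧ ∀ v : V, ∃! e, e ∈ M ∧ v ∈ e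

/-!
Take the direction-`k` edge at the vertices with `x i = x j` and the complement edge at the
others. Both partner maps are involutions preserving the condition `x i = x j` (as `i, j ≠ k`),
so this is a perfect matching `M` of `FQ n`.

In `Q n` any two neighbours `v, w` of a vertex `u` have a second common neighbour, namely
`u + v + w`. In `FQ n − M` this fails for `u = 0`, `v = ū` and `w = e_i`: a common neighbour
reached by two cube edges would put `ū` and `e_i` at Hamming distance at most `2 < n − 1`; one
joined to `ū` by a complement edge is `u` itself; and the complement edge from `e_i` lies in
`M`, because the vertex `ē_i` has different `i`- and `j`-coordinates.
-/

theorem Function.Involutive.ite {α : Type*} {p : α → Prop} [DecidablePred p] {f g : α → α}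
    (hf : Function.Involutive f) (hg : Function.Involutive g) (hpf : ∀ x, p (f x) ↔ p x)
    (hpg : ∀ x, p (g x) ↔ p x) : Function.Involutive fun x => if p x then f x else g x := by
  intro x
  by_cases hx : p x <;> simp [hx, hpf, hpg, hf x, hg x]

theorem hammingDist_congr {ι : Type*} [Fintype ι] {β : ι → Type*} [∀ i, DecidableEq (β i)]
    {x y x' y' : ∀ i, β i} (h : ∀ i, x i ≠ y i ↔ x' i ≠ y' i) :
    hammingDist x y = hammingDist x' y' := by
  unfold hammingDist
  simp only [h]

namespace SimpleGraph

variable {V W : Type*}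

def IsSquareClosed (G : SimpleGraph V) : Prop :=
  ∀ ⦃u v w⦄, G.Adj u v → G.Adj u w → v ≠ w → ∃ z, z ≠ u ∧ G.Adj z v ∧ G.Adj z w

theorem IsSquareClosed.of_iso {G : SimpleGraph V} {H : SimpleGraph W} (hH : H.IsSquareClosed)
    (φ : G ≃g H) : G.IsSquareClosed := by
  intro u v w huv huw hvw
  obtain ⟨z, hzu, hzv, hzw⟩ :=
    hH (φ.map_adj_iff.2 huv) (φ.map_adj_iff.2 huw) (φ.injective.ne hvw)
  refine ⟨φ.symm z, fun h => hzu ?_, ?_, ?_⟩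
  · rw [← h, φ.apply_symm_apply]
  · simpa using φ.symm.map_adj_iff.2 hzv
  · simpa using φ.symm.map_adj_iff.2 hzw

variable {f : V → V}

theorem mk_mem_range_iff_of_involutive (hf : Function.Involutive f) {a b : V} :
    s(a, b) ∈ Set.range (fun x => s(x, f x)) ↔ b = f a := by
  constructor
  · rintro ⟨x, hx⟩
    rcases Sym2.eq_iff.mp hx with ⟨rfl, rfl⟩ | ⟨rfl, rfl⟩
    exacts [rfl, (hf x).symm]
  · rintro rfl
    exact ⟨a, rfl⟩

theorem deleteEdges_range_adj_of_involutive {G : SimpleGraph V} (hf : Function.Involutive f)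
    {a b : V} :
    (G.deleteEdges (Set.range fun x => s(x, f x))).Adj a b ↔ G.Adj a b ∧ b ≠ f a := by
  rw [deleteEdges_adj, mk_mem_range_iff_of_involutive hf]

end SimpleGraph

open SimpleGraph

theorem isPerfectMatchingSet_range_of_involutive {V : Type*} {G : SimpleGraph V} {f : V → V}
    (hf : Function.Involutive f) (hadj : ∀ x, G.Adj x (f x)) :
    IsPerfectMatchingSet G (Set.range fun x => s(x, f x)) := by
  refine ⟨Set.range_subset_iff.2 hadj, fun v => ⟨s(v, f v), ⟨⟨v, rfl⟩, Sym2.mem_mk_left _ _⟩, ?_⟩⟩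
  rintro _ ⟨⟨x, rfl⟩, hv⟩
  rcases Sym2.mem_iff.mp hv with rfl | rfl
  · rfl
  · rw [hf x, Sym2.eq_swap]

section Cube

variable {n : ℕ}

def flipCoord (i : Fin n) (x : Fin n → Bool) : Fin n → Bool := Function.update x i (!x i)

theorem flipCoord_apply_of_ne {i k : Fin n} (h : k ≠ i) (x : Fin n → Bool) :
    flipCoord i x k = x k :=
  Function.update_of_ne h _ _

theorem flipCoord_involutive (i : Fin n) : Function.Involutive (flipCoord i) := by
  intro x
  simp [flipCoord]

theorem hammingDist_flipCoord (x : Fin n → Bool) (i : Fin n) :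
    hammingDist x (flipCoord i x) = 1 := by
  unfold hammingDist
  refine Finset.card_eq_one.2 ⟨i, Finset.ext fun k => ?_⟩
  rw [Finset.mem_filter]
  by_cases hk : k = i <;> simp [flipCoord, hk]

theorem cmpl_involutive : Function.Involutive (@cmpl n) := by
  intro x
  funext k
  simp [cmpl]

theorem cmpl_ne_self (hn : 0 < n) (x : Fin n → Bool) : cmpl x ≠ x := by
  intro h
  simpa [cmpl] using congrFun h ⟨0, hn⟩

theorem hammingDist_cmpl_left (x y : Fin n → Bool) :
    hammingDist (cmpl x) y = n - hammingDist x y := by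
  have h := Finset.card_filter_add_card_filter_not (s := Finset.univ) fun k => x k ≠ y k
  have hc : hammingDist (cmpl x) y = (Finset.univ.filter fun k => ¬ x k ≠ y k).card := by
    unfold hammingDist
    congr 1
    ext k
    cases x k <;> cases y k <;> simp [cmpl]
  rw [Finset.card_univ, Fintype.card_fin] at h
  rw [hc, hammingDist]
  omega

theorem Q_isSquareClosed : (Q n).IsSquareClosed := by
  intro u v w huv huw hvw
  have hxor : ∀ a b c : Bool, (xor (xor a b) c ≠ a ↔ b ≠ c) ∧ (xor (xor a b) c ≠ b ↔ a ≠ c) ∧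
      (xor (xor a b) c ≠ c ↔ a ≠ b) := by decide
  let z k := xor (xor (u k) (v k)) (w k)
  have hzu : hammingDist z u = hammingDist v w := hammingDist_congr fun k => (hxor _ _ _).1
  refine ⟨z, fun h => hvw ?_, ?_, ?_⟩
  · rwa [h, hammingDist_self, eq_comm, hammingDist_eq_zero] at hzu
  · exact (hammingDist_congr fun k => (hxor _ _ _).2.1).trans huw
  · exact (hammingDist_congr fun k => (hxor _ _ _).2.2).trans huv

end Cube

section Mixed

variable {n : ℕ} {i j k : Fin n}

def mixedPartner (i j k : Fin n) (x : Fin n → Bool) : Fin n → Bool :=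
  if x i = x j then flipCoord k x else cmpl x

theorem mixedPartner_involutive (hik : i ≠ k) (hjk : j ≠ k) :
    Function.Involutive (mixedPartner i j k) :=
  (flipCoord_involutive k).ite cmpl_involutive
    (fun x => by rw [flipCoord_apply_of_ne hik, flipCoord_apply_of_ne hjk])
    (fun x => by simp [cmpl])

theorem FQ_adj_mixedPartner (hn : 0 < n) (x : Fin n → Bool) :
    (FQ n).Adj x (mixedPartner i j k x) := by
  unfold mixedPartner
  split_ifs
  · exact Or.inl (hammingDist_flipCoord x k)
  · exact Or.inr ⟨(cmpl_ne_self hn x).symm, rfl⟩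

theorem not_isSquareClosed_deleteEdges_mixedPartner (hn : 4 ≤ n) (hij : i ≠ j) (hik : i ≠ k)
    (hjk : j ≠ k) :
    ¬ ((FQ n).deleteEdges (Set.range fun x => s(x, mixedPartner i j k x))).IsSquareClosed := by
  set u : Fin n → Bool := fun _ => false
  set w := flipCoord i u
  have hwi : w i = true := by simp [w, u, flipCoord]
  have hwj : w j = false := flipCoord_apply_of_ne hij.symm u
  have hu : mixedPartner i j k u = flipCoord k u := if_pos rfl
  have hz : ∀ z, w = cmpl z → mixedPartner i j k z = w := by
    intro z hwz
    rw [← cmpl_involutive z, ← hwz, mixedPartner, if_neg (by simp [cmpl, hwi, hwj]),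
      cmpl_involutive]
  simp only [IsSquareClosed, deleteEdges_range_adj_of_involutive (mixedPartner_involutive hik hjk)]
  intro hsq
  obtain ⟨z, hzu, ⟨hzv, hzv'⟩, ⟨hzw, hzw'⟩⟩ := hsq (v := cmpl u) (w := w)
    ⟨Or.inr ⟨(cmpl_ne_self (by omega) u).symm, rfl⟩, fun h => by
      simpa [hu, u, cmpl, flipCoord_apply_of_ne hik] using congrFun h i⟩
    ⟨Or.inl (hammingDist_flipCoord u i), fun h => by
      simpa [hu, hwi, u, flipCoord_apply_of_ne hik] using congrFun h i⟩
    fun h => by simpa [hwj, u, cmpl] using congrFun h j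
  rcases hzv with hzv | ⟨-, hzv⟩
  · rcases hzw with hzw | ⟨-, hzw⟩
    · have := hammingDist_triangle (cmpl u) z w
      rw [hammingDist_cmpl_left, hammingDist_flipCoord, hammingDist_comm, hzv, hzw] at this
      omega
    · exact hzw' (hz z hzw).symm
  · exact hzu (cmpl_involutive.injective hzv.symm)

end Mixed

/-- For `n ≥ 4`, there is a perfect matching of `FQ n` whose removal does not yield a graph
isomorphic to `Q n`, disproving the conjecture of Dong and Wang. -/
theorem stmt7 (n : ℕ) (hn : 4 ≤ n) :
    ∃ M : Set (Sym2 (Fin n → Bool)), IsPerfectMatchingSet (FQ n) M ∧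
      ¬ Nonempty ((FQ n).deleteEdges M ≃g Q n) := by
  let i : Fin n := ⟨0, by omega⟩
  let j : Fin n := ⟨1, by omega⟩
  let k : Fin n := ⟨2, by omega⟩
  have hij : i ≠ j := by simp [i, j, Fin.ext_iff]
  have hik : i ≠ k := by simp [i, k, Fin.ext_iff]
  have hjk : j ≠ k := by simp [j, k, Fin.ext_iff]
  refine ⟨_, isPerfectMatchingSet_range_of_involutive (mixedPartner_involutive hik hjk)
    (FQ_adj_mixedPartner (by omega)), fun ⟨φ⟩ => ?_⟩
  exact not_isSquareClosed_deleteEdges_mixedPartner hn hij hik hjk (Q_isSquareClosed.of_iso φ)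
end

section
/- For n ≥ 4, any perfect matching M ⊆ M_1 ∪ M_2 of FQ_n obtained by taking, for each x ∈ {0,1}^{n−1}, either the M_1-edge {(x,0),(x,1)} or the pair of M_2-edges {(x,0),(x̄,1)} (chosen consistently so edges are disjoint), with at least one choice of each type, satisfies: FQ_n − M is connected and n-regular but not isomorphic to Q_n. -/
open SimpleGraph

namespace Stmt15Aux

variable {n : ℕ}

/-- Flip coordinate `i`. -/
def flipc (x : Fin n → Bool) (i : Fin n) : Fin n → Bool := Function.update x i (!x i)

@[simp] lemma flipc_self (x : Fin n → Bool) (i : Fin n) : flipc x i i = !x i := by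
  simp [flipc]

lemma flipc_ne' (x : Fin n → Bool) {i k : Fin n} (h : k ≠ i) : flipc x i k = x k := by
  simp [flipc, Function.update_apply, h]

lemma flipc_flipc (x : Fin n → Bool) (i : Fin n) : flipc (flipc x i) i = x := by
  funext k
  by_cases h : k = i
  · subst h; simp [flipc]
  · rw [flipc_ne' _ h, flipc_ne' _ h]

lemma cmpl_apply (x : Fin n → Bool) (i : Fin n) : cmpl x i = !x i := rfl

lemma cmpl_cmpl (x : Fin n → Bool) : cmpl (cmpl x) = x := by
  funext i; simp [cmpl]

lemma cmpl_ne_flipc {x : Fin n → Bool} {i k : Fin n} (hk : k ≠ i) : cmpl x ≠ flipc x i := by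
  intro h
  have := congrFun h k
  rw [cmpl_apply, flipc_ne' x hk] at this
  simp at this

lemma cmpl_ne (x : Fin n → Bool) (i : Fin n) : cmpl x ≠ x := by
  intro h
  have := congrFun h i
  simp [cmpl_apply] at this

lemma exists_ne_fin (hn : 2 ≤ n) (i : Fin n) : ∃ k : Fin n, k ≠ i :=
  Fintype.exists_ne_of_one_lt_card (by simp only [Fintype.card_fin]; omega) i

lemma hammingDist_def (x y : Fin n → Bool) :
    hammingDist x y = (Finset.univ.filter fun i => x i ≠ y i).card := rfl

lemma dist_flipc (x : Fin n → Bool) (i : Fin n) : hammingDist x (flipc x i) = 1 := by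
  rw [hammingDist_def]
  have h : (Finset.univ.filter fun k => x k ≠ flipc x i k) = {i} := by
    ext k
    simp only [Finset.mem_filter, Finset.mem_univ, true_and, Finset.mem_singleton]
    by_cases h : k = i
    · subst h; simp
    · simp [flipc_ne' x h, h]
  rw [h, Finset.card_singleton]

lemma dist_one_iff {x y : Fin n → Bool} : hammingDist x y = 1 ↔ ∃ i, y = flipc x i := by
  constructor
  · intro h
    rw [hammingDist_def, Finset.card_eq_one] at h
    obtain ⟨i, hi⟩ := h
    refine ⟨i, funext fun k => ?_⟩
    by_cases hk : k = i
    · subst hk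
      have hmem : k ∈ Finset.univ.filter fun m => x m ≠ y m := by
        rw [hi]; exact Finset.mem_singleton_self k
      simp only [Finset.mem_filter, Finset.mem_univ, true_and] at hmem
      rw [flipc_self]
      cases hx : x k <;> cases hy : y k <;> simp_all
    · have hmem : k ∉ Finset.univ.filter fun m => x m ≠ y m := by
        rw [hi]; simpa using hk
      simp only [Finset.mem_filter, Finset.mem_univ, true_and] at hmem
      push_neg at hmem
      rw [flipc_ne' x hk, ← hmem]
  · rintro ⟨i, rfl⟩; exact dist_flipc x i

lemma dist_step {x y : Fin n → Bool} {i : Fin n} (h : x i ≠ y i) :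
    hammingDist (flipc x i) y + 1 = hammingDist x y := by
  have hy : y i = !x i := by cases hx : x i <;> cases hyy : y i <;> simp_all
  have hset : (Finset.univ.filter fun k => flipc x i k ≠ y k)
      = (Finset.univ.filter fun k => x k ≠ y k).erase i := by
    ext k
    simp only [Finset.mem_filter, Finset.mem_univ, true_and, Finset.mem_erase]
    by_cases hk : k = i
    · subst hk; simp [hy]
    · simp [flipc_ne' x hk, hk]
  have hmem : i ∈ Finset.univ.filter fun k => x k ≠ y k := by
    simp only [Finset.mem_filter, Finset.mem_univ, true_and]; exact h
  have hpos : 0 < (Finset.univ.filter fun k => x k ≠ y k).card :=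
    Finset.card_pos.mpr ⟨i, hmem⟩
  rw [hammingDist_def, hammingDist_def, hset, Finset.card_erase_of_mem hmem]
  omega

lemma dist_cmpl (x : Fin n → Bool) : hammingDist x (cmpl x) = n := by
  rw [hammingDist_def]
  have h : (Finset.univ.filter fun k => x k ≠ cmpl x k) = Finset.univ := by
    ext k; simp [cmpl_apply]
  rw [h, Finset.card_univ, Fintype.card_fin]

lemma FQ_adj {x y : Fin n → Bool} :
    (FQ n).Adj x y ↔ hammingDist x y = 1 ∨ (x ≠ y ∧ y = cmpl x) := Iff.rfl

lemma Q_adj {x y : Fin n → Bool} : (Q n).Adj x y ↔ hammingDist x y = 1 := Iff.rfl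

lemma eq_of_mem_Mdir {j : Fin n} {a b : Fin n → Bool} (h : s(a, b) ∈ Mdir n j) :
    b = flipc a j := by
  obtain ⟨x, hx⟩ := h
  rw [Sym2.eq_iff] at hx
  rcases hx with ⟨rfl, rfl⟩ | ⟨ha, rfl⟩
  · rfl
  · rw [ha]; exact (flipc_flipc b j).symm

lemma eq_of_mem_M2 {a b : Fin n → Bool} (h : s(a, b) ∈ M2 n) : b = cmpl a := by
  obtain ⟨x, hx⟩ := h
  rw [Sym2.eq_iff] at hx
  rcases hx with ⟨rfl, rfl⟩ | ⟨ha, rfl⟩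
  · rfl
  · rw [ha, cmpl_cmpl]

section Matching

variable {M : Set (Sym2 (Fin n → Bool))} {j : Fin n}

lemma exists_partner (hM : IsPerfectMatchingSet (FQ n) M) (v : Fin n → Bool) :
    ∃ w, s(v, w) ∈ M := by
  obtain ⟨e, ⟨heM, hve⟩, -⟩ := hM.2 v
  obtain ⟨w, rfl⟩ := Sym2.mem_iff_exists.mp hve
  exact ⟨w, heM⟩

lemma partner_unique (hM : IsPerfectMatchingSet (FQ n) M) {v w w' : Fin n → Bool}
    (h : s(v, w) ∈ M) (h' : s(v, w') ∈ M) : w = w' := by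
  obtain ⟨e, -, huniq⟩ := hM.2 v
  have h1 := huniq _ ⟨h, Sym2.mem_mk_left v w⟩
  have h2 := huniq _ ⟨h', Sym2.mem_mk_left v w'⟩
  exact Sym2.congr_right.mp (h1.trans h2.symm)

lemma dichot (hM : IsPerfectMatchingSet (FQ n) M) (hsub : M ⊆ Mdir n j ∪ M2 n)
    (hn : 2 ≤ n) (v : Fin n → Bool) :
    (s(v, flipc v j) ∈ M ∧ s(v, cmpl v) ∉ M) ∨
    (s(v, cmpl v) ∈ M ∧ s(v, flipc v j) ∉ M) := by
  obtain ⟨w, hw⟩ := exists_partner hM v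
  obtain ⟨k, hk⟩ := exists_ne_fin hn j
  rcases hsub hw with hd | hc
  · have hwe := eq_of_mem_Mdir hd
    subst hwe
    left
    refine ⟨hw, fun hcm => ?_⟩
    exact cmpl_ne_flipc hk (partner_unique hM hcm hw)
  · have hwe := eq_of_mem_M2 hc
    subst hwe
    right
    refine ⟨hw, fun hdm => ?_⟩
    exact cmpl_ne_flipc hk (partner_unique hM hdm hw).symm

lemma survive_dir (hsub : M ⊆ Mdir n j ∪ M2 n) (hn : 2 ≤ n) {i : Fin n} (hij : i ≠ j)
    (a : Fin n → Bool) : s(a, flipc a i) ∉ M := by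
  intro hmem
  rcases hsub hmem with hd | hc
  · have h := eq_of_mem_Mdir hd
    have h2 := congrFun h i
    rw [flipc_self, flipc_ne' a hij] at h2
    simp at h2
  · have h := eq_of_mem_M2 hc
    obtain ⟨k, hk⟩ := exists_ne_fin hn i
    have h2 := congrFun h k
    rw [flipc_ne' a hk, cmpl_apply] at h2
    simp at h2

lemma del_adj_dir (hsub : M ⊆ Mdir n j ∪ M2 n) (hn : 2 ≤ n) {i : Fin n} (hij : i ≠ j)
    (a : Fin n → Bool) : ((FQ n).deleteEdges M).Adj a (flipc a i) := by
  rw [SimpleGraph.deleteEdges_adj, FQ_adj]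
  exact ⟨Or.inl (dist_flipc a i), survive_dir hsub hn hij a⟩

lemma del_adj_j (hM : IsPerfectMatchingSet (FQ n) M) (hn : 2 ≤ n) {v : Fin n → Bool}
    (hT : s(v, cmpl v) ∈ M) : ((FQ n).deleteEdges M).Adj v (flipc v j) := by
  rw [SimpleGraph.deleteEdges_adj, FQ_adj]
  refine ⟨Or.inl (dist_flipc v j), fun hmem => ?_⟩
  obtain ⟨k, hk⟩ := exists_ne_fin hn j
  exact cmpl_ne_flipc hk (partner_unique hM hT hmem)

lemma del_adj_cmpl (hM : IsPerfectMatchingSet (FQ n) M) (hn : 2 ≤ n) {v : Fin n → Bool}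
    (hS : s(v, flipc v j) ∈ M) : ((FQ n).deleteEdges M).Adj v (cmpl v) := by
  rw [SimpleGraph.deleteEdges_adj, FQ_adj]
  obtain ⟨k, hk⟩ := exists_ne_fin hn j
  refine ⟨Or.inr ⟨(cmpl_ne v j).symm, rfl⟩, fun hmem => ?_⟩
  exact cmpl_ne_flipc hk (partner_unique hM hmem hS)

lemma reach_same (hsub : M ⊆ Mdir n j ∪ M2 n) (hn : 2 ≤ n) :
    ∀ (d : ℕ) (a b : Fin n → Bool), a j = b j → hammingDist a b = d →
      ((FQ n).deleteEdges M).Reachable a b := by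
  intro d
  induction d with
  | zero =>
    intro a b _ hd
    rw [hammingDist_eq_zero] at hd
    exact hd ▸ Reachable.refl a
  | succ d ih =>
    intro a b hj hd
    have hne : ∃ i, a i ≠ b i := by
      by_contra hcon
      push_neg at hcon
      rw [funext hcon, hammingDist_self] at hd
      omega
    obtain ⟨i, hi⟩ := hne
    have hij : i ≠ j := fun h => hi (h ▸ hj)
    have hd' : hammingDist (flipc a i) b = d := by
      have := dist_step hi
      omega
    have hstep := del_adj_dir hsub hn hij a
    exact hstep.reachable.trans
      (ih (flipc a i) b (by rw [flipc_ne' a (Ne.symm hij)]; exact hj) hd')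

lemma connected_del (hM : IsPerfectMatchingSet (FQ n) M) (hsub : M ⊆ Mdir n j ∪ M2 n)
    (hn : 2 ≤ n) (h2 : (M ∩ M2 n).Nonempty) : ((FQ n).deleteEdges M).Connected := by
  rw [connected_iff]
  refine ⟨?_, ⟨fun _ => false⟩⟩
  obtain ⟨e, heM, hz⟩ := h2
  obtain ⟨z, rfl⟩ := hz
  have hcross : ((FQ n).deleteEdges M).Adj z (flipc z j) := del_adj_j hM hn heM
  have aux : ∀ u v : Fin n → Bool, u j ≠ v j → z j = u j →
      ((FQ n).deleteEdges M).Reachable u v := by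
    intro u v huv hzu
    have r1 := reach_same hsub hn (hammingDist u z) u z hzu.symm rfl
    have r2 : flipc z j j = v j := by
      rw [flipc_self, hzu]
      cases hu : u j <;> cases hv : v j <;> simp_all
    have r3 := reach_same hsub hn (hammingDist (flipc z j) v) (flipc z j) v r2 rfl
    exact r1.trans (hcross.reachable.trans r3)
  intro u v
  by_cases huv : u j = v j
  · exact reach_same hsub hn (hammingDist u v) u v huv rfl
  · rcases eq_or_ne (z j) (u j) with h | h
    · exact aux u v huv h
    · have hzv : z j = v j := by
        cases hu : u j <;> cases hv : v j <;> cases hz2 : z j <;> simp_all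
      exact (aux v u (Ne.symm huv) hzv).symm

lemma regular_del (hM : IsPerfectMatchingSet (FQ n) M) (hsub : M ⊆ Mdir n j ∪ M2 n)
    (hn : 2 ≤ n) (v : Fin n → Bool) :
    (((FQ n).deleteEdges M).neighborSet v).ncard = n := by
  classical
  set Nfull : Set (Fin n → Bool) := ((fun i => flipc v i) '' Set.univ) ∪ {cmpl v} with hN
  have hinj : Function.Injective (fun i => flipc v i) := by
    intro i i' h
    by_contra hne
    have h1 : flipc v i i = flipc v i' i := congrFun h i
    rw [flipc_self, flipc_ne' v hne] at h1
    simp at h1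
  have hnotin : cmpl v ∉ (fun i => flipc v i) '' Set.univ := by
    rintro ⟨i, -, hi⟩
    obtain ⟨k, hk⟩ := exists_ne_fin hn i
    exact cmpl_ne_flipc hk hi.symm
  have hfullcard : Nfull.ncard = n + 1 := by
    rw [hN, Set.ncard_union_eq (Set.disjoint_singleton_right.mpr hnotin)
      (Set.toFinite _) (Set.toFinite _),
      Set.ncard_image_of_injective _ hinj, Set.ncard_singleton, Set.ncard_univ,
      Nat.card_eq_fintype_card, Fintype.card_fin]
  have hFQnbr : ∀ w, (FQ n).Adj v w ↔ w ∈ Nfull := by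
    intro w
    rw [FQ_adj, hN]
    constructor
    · rintro (h | ⟨-, rfl⟩)
      · obtain ⟨i, rfl⟩ := dist_one_iff.mp h
        exact Or.inl ⟨i, Set.mem_univ i, rfl⟩
      · exact Or.inr rfl
    · rintro (⟨i, -, rfl⟩ | h)
      · exact Or.inl (dist_flipc v i)
      · rw [Set.mem_singleton_iff] at h
        subst h
        exact Or.inr ⟨(cmpl_ne v ⟨0, by omega⟩).symm, rfl⟩
  obtain ⟨w₀, hw0M, hw0mem⟩ : ∃ w₀, s(v, w₀) ∈ M ∧ w₀ ∈ Nfull := by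
    rcases dichot hM hsub hn v with ⟨hS, -⟩ | ⟨hT, -⟩
    · exact ⟨flipc v j, hS, Or.inl ⟨j, Set.mem_univ j, rfl⟩⟩
    · exact ⟨cmpl v, hT, Or.inr rfl⟩
  have hkey : ((FQ n).deleteEdges M).neighborSet v = Nfull \ {w₀} := by
    ext w
    simp only [mem_neighborSet, SimpleGraph.deleteEdges_adj, Set.mem_diff,
      Set.mem_singleton_iff]
    constructor
    · rintro ⟨hadj, hnm⟩
      refine ⟨(hFQnbr w).mp hadj, fun h => hnm (h ▸ hw0M)⟩
    · rintro ⟨hmem, hne⟩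
      refine ⟨(hFQnbr w).mpr hmem, fun hmM => hne (partner_unique hM hmM hw0M)⟩
  rw [hkey, Set.ncard_diff_singleton_of_mem hw0mem, hfullcard]
  omega

lemma transition_aux (hM : IsPerfectMatchingSet (FQ n) M) (hsub : M ⊆ Mdir n j ∪ M2 n)
    (hn : 2 ≤ n) :
    ∀ (d : ℕ) (a c : Fin n → Bool), s(a, flipc a j) ∈ M → s(c, cmpl c) ∈ M →
      a j = c j → hammingDist a c = d →
      ∃ u i, i ≠ j ∧ s(u, flipc u j) ∈ M ∧ s(flipc u i, cmpl (flipc u i)) ∈ M := by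
  intro d
  induction d with
  | zero =>
    intro a c hS hT hj hd
    rw [hammingDist_eq_zero] at hd
    subst hd
    obtain ⟨k, hk⟩ := exists_ne_fin hn j
    exact absurd (partner_unique hM hT hS) (cmpl_ne_flipc hk)
  | succ d ih =>
    intro a c hS hT hj hd
    have hne : ∃ i, a i ≠ c i := by
      by_contra hcon
      push_neg at hcon
      rw [funext hcon, hammingDist_self] at hd
      omega
    obtain ⟨i, hi⟩ := hne
    have hij : i ≠ j := fun h => hi (h ▸ hj)
    have hd' : hammingDist (flipc a i) c = d := by
      have := dist_step hi
      omega
    rcases dichot hM hsub hn (flipc a i) with ⟨hS', -⟩ | ⟨hT', -⟩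
    · exact ih (flipc a i) c hS' hT (by rw [flipc_ne' a (Ne.symm hij)]; exact hj) hd'
    · exact ⟨a, i, hij, hS, hT'⟩

lemma transition (hM : IsPerfectMatchingSet (FQ n) M) (hsub : M ⊆ Mdir n j ∪ M2 n)
    (hn : 2 ≤ n) (h1 : ∃ a, s(a, flipc a j) ∈ M) (h2 : ∃ b, s(b, cmpl b) ∈ M) :
    ∃ u i, i ≠ j ∧ s(u, flipc u j) ∈ M ∧ s(flipc u i, cmpl (flipc u i)) ∈ M := by
  obtain ⟨a, ha⟩ := h1
  obtain ⟨b, hb⟩ := h2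
  obtain ⟨k, hk⟩ := exists_ne_fin hn j
  have hb' : ∃ b', s(b', cmpl b') ∈ M ∧ b' j = a j := by
    by_cases h : b j = a j
    · exact ⟨b, hb, h⟩
    · refine ⟨flipc b j, ?_, ?_⟩
      · rcases dichot hM hsub hn (flipc b j) with ⟨hS, -⟩ | ⟨hT, -⟩
        · exfalso
          rw [flipc_flipc] at hS
          have hS' : s(b, flipc b j) ∈ M := by rwa [Sym2.eq_swap] at hS
          exact cmpl_ne_flipc hk (partner_unique hM hb hS')
        · exact hT
      · rw [flipc_self]
        cases hbj : b j <;> cases haj : a j <;> simp_all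
  obtain ⟨c, hc, hcj⟩ := hb'
  exact transition_aux hM hsub hn (hammingDist a c) a c ha hc hcj.symm rfl

lemma witness (hM : IsPerfectMatchingSet (FQ n) M) (hsub : M ⊆ Mdir n j ∪ M2 n)
    (hn : 4 ≤ n) (h1 : ∃ a, s(a, flipc a j) ∈ M) (h2 : ∃ b, s(b, cmpl b) ∈ M) :
    ∃ u v w : Fin n → Bool, u ≠ w ∧ ((FQ n).deleteEdges M).Adj u v ∧
      ((FQ n).deleteEdges M).Adj w v ∧
      ∀ z, ((FQ n).deleteEdges M).Adj u z → ((FQ n).deleteEdges M).Adj w z → z = cmpl u := by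
  have hn2 : 2 ≤ n := by omega
  obtain ⟨u, i, hij, hS, hT'⟩ := transition hM hsub hn2 h1 h2
  refine ⟨u, cmpl u, flipc (cmpl u) i, ?_, del_adj_cmpl hM hn2 hS,
    (del_adj_dir hsub hn2 hij (cmpl u)).symm, ?_⟩
  · obtain ⟨k, hk⟩ := exists_ne_fin hn2 i
    intro h
    have h2 := congrFun h k
    rw [flipc_ne' _ hk, cmpl_apply] at h2
    simp at h2
  · have hcw : cmpl (flipc (cmpl u) i) = flipc u i := by
      funext k
      by_cases hki : k = i
      · subst hki
        rw [cmpl_apply, flipc_self, flipc_self, cmpl_apply, Bool.not_not]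
      · rw [cmpl_apply, flipc_ne' _ hki, flipc_ne' _ hki, cmpl_apply, Bool.not_not]
    intro z hz1 hz2
    rw [SimpleGraph.deleteEdges_adj, FQ_adj] at hz1 hz2
    obtain ⟨hz1a, hz1m⟩ := hz1
    obtain ⟨hz2a, hz2m⟩ := hz2
    rcases hz1a with hdz | ⟨-, rfl⟩
    · rcases hz2a with hdz2 | ⟨-, hcz⟩
      · exfalso
        have e1 : hammingDist u (cmpl u) = n := dist_cmpl u
        have t1 := hammingDist_triangle u z (cmpl u)
        have t2 := hammingDist_triangle z (flipc (cmpl u) i) (cmpl u)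
        have e2 : hammingDist (flipc (cmpl u) i) (cmpl u) = 1 := by
          rw [hammingDist_comm]; exact dist_flipc (cmpl u) i
        have e3 : hammingDist z (flipc (cmpl u) i) = 1 := by
          rw [hammingDist_comm]; exact hdz2
        omega
      · exfalso
        apply hz2m
        rw [hcz, hcw]
        have : s(flipc u i, cmpl (flipc u i)) ∈ M := hT'
        have hgoal : s(flipc (cmpl u) i, flipc u i) = s(flipc u i, cmpl (flipc u i)) := by
          rw [Sym2.eq_swap]
          congr 1
          rw [← hcw, cmpl_cmpl]
        rw [hgoal]
        exact hT'
    · rfl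

lemma Q_two (hn : 2 ≤ n) {u v w : Fin n → Bool} (huw : u ≠ w)
    (h1 : (Q n).Adj u v) (h2 : (Q n).Adj w v) :
    ∃ v', v' ≠ v ∧ (Q n).Adj u v' ∧ (Q n).Adj w v' := by
  rw [Q_adj, hammingDist_comm] at h1 h2
  obtain ⟨i, rfl⟩ := dist_one_iff.mp h1
  obtain ⟨k, rfl⟩ := dist_one_iff.mp h2
  have hik : i ≠ k := fun h => huw (by rw [h])
  have hcomm : flipc (flipc v i) k = flipc (flipc v k) i := by
    funext m
    by_cases hmi : m = i
    · subst hmi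
      rw [flipc_ne' _ hik, flipc_self, flipc_self, flipc_ne' _ hik]
    · by_cases hmk : m = k
      · subst hmk
        rw [flipc_self, flipc_ne' _ (Ne.symm hik), flipc_ne' _ (Ne.symm hik), flipc_self]
      · rw [flipc_ne' _ hmk, flipc_ne' _ hmi, flipc_ne' _ hmi, flipc_ne' _ hmk]
  refine ⟨flipc (flipc v i) k, ?_, ?_, ?_⟩
  · intro h
    have h2 := congrFun h k
    rw [flipc_self, flipc_ne' v (Ne.symm hik)] at h2
    simp at h2
  · rw [Q_adj]; exact dist_flipc (flipc v i) k
  · rw [Q_adj, hcomm]; exact dist_flipc (flipc v k) i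

lemma noniso (hM : IsPerfectMatchingSet (FQ n) M) (hsub : M ⊆ Mdir n j ∪ M2 n)
    (hn : 4 ≤ n) (h1 : ∃ a, s(a, flipc a j) ∈ M) (h2 : ∃ b, s(b, cmpl b) ∈ M) :
    ¬ Nonempty ((FQ n).deleteEdges M ≃g Q n) := by
  rintro ⟨φ⟩
  obtain ⟨u, v, w, huw, ha1, ha2, huniq⟩ := witness hM hsub hn h1 h2
  have hquw : φ u ≠ φ w := fun h => huw (φ.toEquiv.injective h)
  obtain ⟨v', hv', q1, q2⟩ := Q_two (show 2 ≤ n by omega) hquw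
    (φ.map_rel_iff.mpr ha1) (φ.map_rel_iff.mpr ha2)
  have hz1 : ((FQ n).deleteEdges M).Adj u (φ.symm v') := by
    apply φ.map_rel_iff.mp
    rwa [RelIso.apply_symm_apply]
  have hz2 : ((FQ n).deleteEdges M).Adj w (φ.symm v') := by
    apply φ.map_rel_iff.mp
    rwa [RelIso.apply_symm_apply]
  have hveq : v = cmpl u := huniq v ha1 ha2
  have := huniq _ hz1 hz2
  rw [← hveq] at this
  apply hv'
  rw [← RelIso.apply_symm_apply φ v', this]

end Matching

end Stmt15Aux

open Stmt15Aux in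
/-- A perfect matching `M ⊆ M₁ ∪ M₂` using at least one edge of each type gives a graph
`FQ n − M` that is connected and `n`-regular but not isomorphic to `Q n`. -/
theorem stmt15 (n : ℕ) (hn : 4 ≤ n) (M : Set (Sym2 (Fin n → Bool)))
    (hM : IsPerfectMatchingSet (FQ n) M)
    (hsub : M ⊆ Mdir n ⟨n - 1, by omega⟩ ∪ M2 n)
    (h1 : (M ∩ (Mdir n ⟨n - 1, by omega⟩)).Nonempty) (h2 : (M ∩ M2 n).Nonempty) :
    ((FQ n).deleteEdges M).Connected ∧
    (∀ v : Fin n → Bool, (((FQ n).deleteEdges M).neighborSet v).ncard = n) ∧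
    ¬ Nonempty ((FQ n).deleteEdges M ≃g Q n) := by
  have hn2 : 2 ≤ n := by omega
  set j : Fin n := ⟨n - 1, by omega⟩ with hj
  have h1' : ∃ a, s(a, flipc a j) ∈ M := by
    obtain ⟨e, heM, x, rfl⟩ := h1
    exact ⟨x, heM⟩
  have h2' : ∃ b, s(b, cmpl b) ∈ M := by
    obtain ⟨e, heM, x, rfl⟩ := h2
    exact ⟨x, heM⟩
  exact ⟨connected_del hM hsub hn2 h2, regular_del hM hsub hn2,
    noniso hM hsub hn h1' h2'⟩
end
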